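/- arXiv:1803.02799 — 2 statements merged into one kernel-verified Lean document; each statement's English description precedes it below -/
import Mathlib

section
/- Let g be a Lie algebra with flat torsion-free connection ∇ (∇_X Y − ∇_Y X = [X,Y], curvature zero). Define on g ⊕ g the almost complex structure I(X ⊕ Y) = (−Y) ⊕ X and the bracket of the semidirect product g ⋉_∇ ℝⁿ (where g acts on the abelian ideal ℝⁿ ≅ g via X ↦ ∇_X): [X₁⊕Y₁, X₂⊕Y₂] = [X₁,X₂] ⊕ (∇_{X₁}Y₂ − ∇_{X₂}Y₁). Then I is integrable in the sense that the Nijenhuis-type condition [IX, IY] − [X,Y] − I[IX,Y] − I[X,IY] = 0 holds for all X, Y in g ⋉_∇ ℝⁿ. -/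
/-- Let `g` be a Lie algebra with a flat torsion-free connection `Cov`
(`Cov_X Y − Cov_Y X = [X,Y]`, curvature zero).  On the semidirect product
`g ⋉_Cov ℝⁿ` (pairs `X ⊕ Y` with the abelian ideal a copy of `g`, on which `g`
acts by `X ↦ Cov_X`), with bracket
`[X₁⊕Y₁, X₂⊕Y₂] = [X₁,X₂] ⊕ (Cov_{X₁}Y₂ − Cov_{X₂}Y₁)`, the almost complex
structure `I(X ⊕ Y) = (−Y) ⊕ X` has vanishing algebraic Nijenhuis tensor
`N(P,Q) = [IP,IQ] − [P,Q] − I[IP,Q] − I[P,IQ]`, i.e. `I` is integrable. -/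
theorem nijenhuis_vanishes (L : Type) [LieRing L] [LieAlgebra ℝ L]
    (Cov : L →ₗ[ℝ] L →ₗ[ℝ] L)
    (htf : ∀ X Y : L, Cov X Y - Cov Y X = ⁅X, Y⁆)
    (hflat : ∀ X Y Z : L, Cov X (Cov Y Z) - Cov Y (Cov X Z) = Cov ⁅X, Y⁆ Z) :
    ∀ P Q : L × L,
      (let br : L × L → L × L → L × L :=
        fun p q => (⁅p.1, q.1⁆, Cov p.1 q.2 - Cov q.1 p.2)
       let I : L × L → L × L := fun p => (-p.2, p.1)
       br (I P) (I Q) - br P Q - I (br (I P) Q) - I (br P (I Q)) = 0) := by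
  intro P Q
  obtain ⟨a, b⟩ := P
  obtain ⟨c, d⟩ := Q
  dsimp only
  refine Prod.ext ?_ ?_ <;>
    simp only [Prod.fst_sub, Prod.snd_sub, Prod.fst_zero, Prod.snd_zero,
      map_neg, LinearMap.neg_apply, neg_neg, lie_neg, neg_lie]
  · rw [← htf, ← htf]; abel
  · rw [← htf, ← htf]; abel
end

section
/- Let V be a finite-dimensional real vector space, g a symmetric bilinear form on a manifold M, and suppose g^T on TM is defined from g by the formula g^T(X,Y) = π*g(X,Y) + π*g(IX,IY) + √−1 π*g(IX,Y) − √−1 π*g(X,IY). If g is positive definite on M then the real part of g^T is a positive definite symmetric bilinear form on each tangent space of TM. -/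
/-- Fiberwise statement: let `g` be a positive definite symmetric bilinear form on `V`
(the tangent space of `M` at a point); model the tangent space of `TM` as `V × V`
(horizontal ⊕ vertical), with `π*g((a,b),(c,d)) = g(a,c)` (vanishing on vertical
vectors, agreeing with `g` on horizontal ones) and `I(a,b) = (−b,a)` the almost
complex structure swapping horizontal and vertical.  If `g^T` is defined by
`g^T(X,Y) = π*g(X,Y) + π*g(IX,IY) + √−1 π*g(IX,Y) − √−1 π*g(X,IY)`, then the real
part of `g^T` is a positive definite symmetric bilinear form on `V × V`. -/
theorem real_part_posdef (V : Type) [AddCommGroup V] [Module ℝ V]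
    (g : V →ₗ[ℝ] V →ₗ[ℝ] ℝ)
    (hsymm : ∀ x y : V, g x y = g y x)
    (hpos : ∀ x : V, x ≠ 0 → 0 < g x x) :
    (let J : V × V → V × V := fun Z => (-Z.2, Z.1);
     let pg : V × V → V × V → ℝ := fun Z W => g Z.1 W.1;
     let gT : V × V → V × V → ℂ := fun Z W =>
       (pg Z W : ℂ) + (pg (J Z) (J W) : ℂ)
         + Complex.I * (pg (J Z) W : ℂ) - Complex.I * (pg Z (J W) : ℂ);
     (∀ X Y : V × V, (gT X Y).re = (gT Y X).re)
       ∧ (∀ X : V × V, X ≠ 0 → 0 < (gT X X).re)) := by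
  intro J pg gT
  have hnn : ∀ x : V, 0 ≤ g x x := by
    intro x
    by_cases hx : x = 0
    · simp [hx]
    · exact le_of_lt (hpos x hx)
  have hre : ∀ X Y : V × V, (gT X Y).re = g X.1 Y.1 + g X.2 Y.2 := by
    intro X Y
    simp [gT, pg, J, Complex.add_re, Complex.sub_re, Complex.mul_re]
  constructor
  · intro X Y
    rw [hre, hre, hsymm X.1 Y.1, hsymm X.2 Y.2]
  · intro X hX
    rw [hre]
    have h : ¬(X.1 = 0 ∧ X.2 = 0) := by
      intro ⟨h1, h2⟩
      exact hX (Prod.ext h1 h2)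
    by_cases h1 : X.1 = 0
    · have h2 : X.2 ≠ 0 := fun h2 => h ⟨h1, h2⟩
      have := hpos X.2 h2
      have := hnn X.1
      linarith
    · have := hpos X.1 h1
      have := hnn X.2
      linarith
end
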